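/- Let p ∈ (1,∞) and δ ≥ 0 with (δ, |A|) ≠ (0, 0), let φ = φ_{p,δ}, and let F(P) = (δ + |P^sym|)^{(p-2)/2} P^sym. Then there exist constants c, C > 0 depending only on p such that for every symmetric A ∈ ℝ^{3×3}_sym (A ≠ 0 if δ = 0) and every symmetric B ∈ ℝ^{3×3}_sym: c·φ''(|A|)·|B|² ≤ |DF(A)[B]|² ≤ C·φ''(|A|)·|B|², where DF(A)[B] denotes the directional derivative of F at A in direction B. In particular, for a differentiable symmetric tensor field Q on an open set Ω ⊂ ℝ³ this gives |∂_i F(Q(x))|² ~ φ''(|Q(x)|)|∂_i Q(x)|² for i = 1,2,3. -/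

import Mathlib

noncomputable section

open Matrix

attribute [local instance] Matrix.normedAddCommGroup Matrix.normedSpace

/-- 3×3 real matrices. -/
abbrev Mat3 := Matrix (Fin 3) (Fin 3) ℝ

/-- The symmetric part `P^sym = (P + Pᵀ)/2` of a matrix. -/
def msym (P : Mat3) : Mat3 := (1 / 2 : ℝ) • (P + Pᵀ)

/-- The scalar product of tensors `A·B = Σ_{i,j} A_{ij} B_{ij}`. -/
def mdot (A B : Mat3) : ℝ := ∑ i, ∑ j, A i j * B i j

/-- The Euclidean (Frobenius) norm `|A| = √(A·A)`. -/
def mnorm (A : Mat3) : ℝ := Real.sqrt (mdot A A)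

/-- The N-function `φ_{p,δ}(t) = ∫₀ᵗ (δ+s)^{p-2} s ds`. -/
def phi (p δ t : ℝ) : ℝ := ∫ s in (0:ℝ)..t, (δ + s) ^ (p - 2) * s

/-- Its first derivative `φ'(t) = (δ+t)^{p-2} t`. -/
def phi' (p δ t : ℝ) : ℝ := (δ + t) ^ (p - 2) * t

/-- Its second derivative `φ''(t) = (p-2)(δ+t)^{p-3} t + (δ+t)^{p-2}` (for `t > 0`). -/
def phi'' (p δ t : ℝ) : ℝ := (p - 2) * (δ + t) ^ (p - 3) * t + (δ + t) ^ (p - 2)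

/-- The partial derivative `∂_{kl} S_{ij}(P)` of the `(i,j)` component of `S`
with respect to the `(k,l)` matrix entry. -/
def DS (S : Mat3 → Mat3) (P : Mat3) (k l i j : Fin 3) : ℝ :=
  fderiv ℝ S P (Matrix.single k l 1) i j

/-- A tensor field `S` has `(p,δ)`-structure with characteristics `(κ₀, κ₁, p)`. -/
structure PDelta (p δ κ₀ κ₁ : ℝ) (S : Mat3 → Mat3) : Prop where
  cont : Continuous S
  smooth : ContDiffOn ℝ 1 S {(0 : Mat3)}ᶜ
  symval : ∀ P, (S P)ᵀ = S P
  symdep : ∀ P, S P = S (msym P)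
  zero : S 0 = 0
  lower : ∀ P Q : Mat3, msym P ≠ 0 →
    κ₀ * phi'' p δ (mnorm (msym P)) * (mnorm (msym Q)) ^ 2 ≤
      ∑ i, ∑ j, ∑ k, ∑ l, DS S P k l i j * Q i j * Q k l
  upper : ∀ P : Mat3, msym P ≠ 0 → ∀ i j k l : Fin 3,
    |DS S P k l i j| ≤ κ₁ * phi'' p δ (mnorm (msym P))

/-- The tensor field `F(P) = (δ + |P^sym|)^{(p-2)/2} P^sym` associated to `S`. -/
def Fassoc (p δ : ℝ) (P : Mat3) : Mat3 :=
  (δ + mnorm (msym P)) ^ ((p - 2) / 2) • msym P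

/-!
For `d = δ + |A|`, `t = |A|` and `s = A·B/|A|`, the chain rule gives
`DF(A)[B] = d^{(p-2)/2} B + ((p-2)/2) d^{(p-4)/2} s A`, hence
`|DF(A)[B]|² = d^{p-4} (d² |B|² + ((p-2) d t + (p-2)²/4 t²) s²)`,
while `φ''(t) = d^{p-4} d (d + (p-2) t)`. Since `s² ∈ [0, |B|²]` by Cauchy–Schwarz, the bracket is
an affine function of `s²` lying between its endpoint values `d² |B|²` and `(d + (p-2)t/2)² |B|²`,
and as `0 ≤ t ≤ d` both `d²`, `(d + (p-2)t/2)²` and `d (d + (p-2) t)` are comparable to `d²` with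
constants depending only on `p`. The computation works in any real inner product space; symmetric
matrices enter through the Frobenius isometry `ℝ^(3×3) ≃ ℝ^9`.
-/

open scoped RealInnerProductSpace

theorem hasFDerivAt_smul_self_zero {𝕜 E : Type*} [NontriviallyNormedField 𝕜]
    [NormedAddCommGroup E] [NormedSpace 𝕜 E] {g : E → 𝕜} (hg : ContinuousAt g 0) :
    HasFDerivAt (fun x => g x • x) (g 0 • ContinuousLinearMap.id 𝕜 E) 0 := by
  have hsmall : (fun x => g x - g 0) =o[nhds 0] (fun _ => (1 : 𝕜)) :=
    Asymptotics.isLittleO_one_iff 𝕜 |>.2 (by simpa using hg.tendsto.sub_const (g 0))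
  rw [hasFDerivAt_iff_isLittleO_nhds_zero]
  simpa [sub_smul] using hsmall.smul_isBigO (Asymptotics.isBigO_refl id _)

section Scalar

variable {p δ d t b m L K X : ℝ}

theorem mul_le_add_mul_of_le (hm : 0 ≤ m) (hmb : m ≤ b) (h₀ : L ≤ X) (h₁ : L ≤ X + K) :
    L * b ≤ X * b + K * m := by
  rcases le_total 0 K with hK | hK <;> nlinarith

theorem add_mul_le_mul_of_le (hm : 0 ≤ m) (hmb : m ≤ b) (h₀ : X ≤ L) (h₁ : X + K ≤ L) :
    X * b + K * m ≤ L * b := by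
  rcases le_total 0 K with hK | hK <;> nlinarith

theorem add_sub_two_mul_mem_Icc (ht : 0 ≤ t) (htd : t ≤ d) :
    d + (p - 2) * t ∈ Set.Icc (min 1 (p - 1) * d) (max 1 (p - 1) * d) := by
  rcases le_total p 2 with h | h
  · rw [min_eq_right (by linarith), max_eq_left (by linarith)]
    constructor <;> nlinarith
  · rw [min_eq_left (by linarith), max_eq_right (by linarith)]
    constructor <;> nlinarith

theorem add_half_sub_two_mul_sq_mem_Icc (hp : 1 < p) (ht : 0 ≤ t) (htd : t ≤ d) :
    (d + (p - 2) / 2 * t) ^ 2 ∈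
      Set.Icc (min 1 (p ^ 2 / 4) * d ^ 2) (max 1 (p ^ 2 / 4) * d ^ 2) := by
  rcases le_total p 2 with h | h
  · rw [min_eq_right (by nlinarith), max_eq_left (by nlinarith)]
    constructor
    · nlinarith [mul_nonneg (show 0 ≤ (2 - p) * (d - t) by nlinarith)
        (show 0 ≤ d + (p - 2) / 2 * t + p / 2 * d by nlinarith)]
    · nlinarith [mul_nonneg (show 0 ≤ (2 - p) * t by nlinarith)
        (show 0 ≤ 2 * d + (p - 2) / 2 * t by nlinarith)]
  · rw [min_eq_left (by nlinarith), max_eq_right (by nlinarith)]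
    constructor
    · nlinarith [mul_nonneg (show 0 ≤ (p - 2) * t by nlinarith)
        (show 0 ≤ 2 * d + (p - 2) / 2 * t by nlinarith)]
    · nlinarith [mul_nonneg (show 0 ≤ (p - 2) * (d - t) by nlinarith)
        (show 0 ≤ d + (p - 2) / 2 * t + p / 2 * d by nlinarith)]

theorem quadratic_bounds (hp : 1 < p) (hd : 0 < d) (ht : 0 ≤ t) (htd : t ≤ d)
    (hm : 0 ≤ m) (hmb : m ≤ b) :
    min 1 (p ^ 2 / 4) / max 1 (p - 1) * (d * (d + (p - 2) * t) * b) ≤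
        d ^ 2 * b + ((p - 2) * d * t + (p - 2) ^ 2 / 4 * t ^ 2) * m ∧
      d ^ 2 * b + ((p - 2) * d * t + (p - 2) ^ 2 / 4 * t ^ 2) * m ≤
        max 1 (p ^ 2 / 4) / min 1 (p - 1) * (d * (d + (p - 2) * t) * b) := by
  obtain ⟨hE₀, hE₁⟩ := add_sub_two_mul_mem_Icc (p := p) ht htd
  obtain ⟨hS₀, hS₁⟩ := add_half_sub_two_mul_sq_mem_Icc hp ht htd
  have hlo : 0 < min 1 (p - 1) := lt_min one_pos (by linarith)
  have hhi : 0 < max 1 (p - 1) := one_pos.trans_le (le_max_left _ _)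
  have hb : 0 ≤ b := hm.trans hmb
  have hsq : d ^ 2 + ((p - 2) * d * t + (p - 2) ^ 2 / 4 * t ^ 2) = (d + (p - 2) / 2 * t) ^ 2 := by
    ring
  constructor
  · calc min 1 (p ^ 2 / 4) / max 1 (p - 1) * (d * (d + (p - 2) * t) * b)
        ≤ min 1 (p ^ 2 / 4) / max 1 (p - 1) * (d * (max 1 (p - 1) * d) * b) := by gcongr
      _ = min 1 (p ^ 2 / 4) * d ^ 2 * b := by field_simp
      _ ≤ _ := mul_le_add_mul_of_le hm hmb
          (mul_le_of_le_one_left (sq_nonneg d) (min_le_left _ _)) (hsq ▸ hS₀)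
  · calc _ ≤ max 1 (p ^ 2 / 4) * d ^ 2 * b := add_mul_le_mul_of_le hm hmb
          (le_mul_of_one_le_left (sq_nonneg d) (le_max_left _ _)) (hsq ▸ hS₁)
      _ = max 1 (p ^ 2 / 4) / min 1 (p - 1) * (d * (min 1 (p - 1) * d) * b) := by field_simp
      _ ≤ max 1 (p ^ 2 / 4) / min 1 (p - 1) * (d * (d + (p - 2) * t) * b) := by gcongr

theorem phi''_eq_rpow_mul (hd : 0 < δ + t) :
    phi'' p δ t = (δ + t) ^ (p - 4) * ((δ + t) * (δ + t + (p - 2) * t)) := by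
  have h₃ : (δ + t) ^ (p - 3) = (δ + t) ^ (p - 4) * (δ + t) := by
    rw [← Real.rpow_add_one hd.ne']; ring_nf
  have h₂ : (δ + t) ^ (p - 2) = (δ + t) ^ (p - 4) * (δ + t) ^ 2 := by
    rw [← Real.rpow_natCast, ← Real.rpow_add hd]; ring_nf
  rw [phi'', h₃, h₂]
  ring

end Scalar

section InnerProductSpace

variable {E : Type*} [NormedAddCommGroup E] [InnerProductSpace ℝ E]

theorem hasFDerivAt_norm {a : E} (ha : a ≠ 0) :
    HasFDerivAt (fun x : E => ‖x‖) (‖a‖⁻¹ • innerSL ℝ a) a := by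
  have hsqrt : ∀ x : E, √(‖x‖ ^ 2) = ‖x‖ := fun x => Real.sqrt_sq (norm_nonneg x)
  have h := (Real.hasDerivAt_sqrt (pow_ne_zero 2 (norm_ne_zero_iff.2 ha))).comp_hasFDerivAt a
    (hasStrictFDerivAt_norm_sq a).hasFDerivAt
  simp only [Function.comp_def, hsqrt] at h
  refine h.congr_fderiv ?_
  ext x
  simp only [one_div, _root_.mul_inv_rev, _root_.smul_apply, coe_innerSL_apply, nsmul_eq_mul,
    Nat.cast_ofNat, smul_eq_mul]
  field_simp

theorem inner_div_norm_mul_norm (a b : E) : ⟪a, b⟫ / ‖a‖ * ‖a‖ = ⟪a, b⟫ := by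
  rcases eq_or_ne a 0 with rfl | ha
  · simp
  · exact div_mul_cancel₀ _ (norm_ne_zero_iff.2 ha)

theorem sq_inner_div_norm_le (a b : E) : (⟪a, b⟫ / ‖a‖) ^ 2 ≤ ‖b‖ ^ 2 := by
  have h : |⟪a, b⟫ / ‖a‖| ≤ ‖b‖ := by
    rw [abs_div, abs_norm]
    exact div_le_of_le_mul₀ (norm_nonneg a) (norm_nonneg b)
      ((abs_real_inner_le_norm a b).trans_eq (mul_comm _ _))
  simpa only [sq_abs] using pow_le_pow_left₀ (abs_nonneg _) h 2

def Fpow (p δ : ℝ) (x : E) : E := (δ + ‖x‖) ^ ((p - 2) / 2) • x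

variable {p δ : ℝ} {a : E}

theorem hasFDerivAt_Fpow_of_ne_zero (ha : a ≠ 0) (hd : 0 < δ + ‖a‖) :
    HasFDerivAt (Fpow p δ)
      ((δ + ‖a‖) ^ ((p - 2) / 2) • ContinuousLinearMap.id ℝ E +
        (((p - 2) / 2 * (δ + ‖a‖) ^ ((p - 2) / 2 - 1) / ‖a‖) • innerSL ℝ a).smulRight a) a := by
  have hg := (Real.hasDerivAt_rpow_const (p := (p - 2) / 2) (Or.inl hd.ne')).comp_hasFDerivAt a
    ((hasFDerivAt_norm ha).const_add δ)
  rw [smul_smul, ← div_eq_mul_inv] at hg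
  exact hg.smul (hasFDerivAt_id a)

theorem hasFDerivAt_Fpow_zero (hδ : 0 < δ) :
    HasFDerivAt (Fpow p δ) (δ ^ ((p - 2) / 2) • ContinuousLinearMap.id ℝ E) 0 := by
  have hg : ContinuousAt (fun x : E => (δ + ‖x‖) ^ ((p - 2) / 2)) 0 :=
    (continuous_const.add continuous_norm).continuousAt.rpow_const (Or.inl (by simpa using hδ.ne'))
  have h := hasFDerivAt_smul_self_zero hg
  rwa [norm_zero, add_zero] at h

theorem differentiableAt_Fpow (hd : 0 < δ + ‖a‖) : DifferentiableAt ℝ (Fpow p δ) a := by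
  rcases eq_or_ne a 0 with rfl | ha
  · exact (hasFDerivAt_Fpow_zero (by simpa using hd)).differentiableAt
  · exact (hasFDerivAt_Fpow_of_ne_zero ha hd).differentiableAt

-- At `a = 0` the second term vanishes through the junk value `⟪0, b⟫ / 0 = 0`.
theorem fderiv_Fpow_apply (hd : 0 < δ + ‖a‖) (b : E) :
    fderiv ℝ (Fpow p δ) a b = (δ + ‖a‖) ^ ((p - 2) / 2) • b +
      ((p - 2) / 2 * (δ + ‖a‖) ^ ((p - 2) / 2 - 1) * (⟪a, b⟫ / ‖a‖)) • a := by
  rcases eq_or_ne a 0 with rfl | ha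
  · simp [(hasFDerivAt_Fpow_zero (by simpa using hd)).fderiv]
  · rw [(hasFDerivAt_Fpow_of_ne_zero ha hd).fderiv]
    simp only [_root_.add_apply, _root_.smul_apply, ContinuousLinearMap.id_apply,
      ContinuousLinearMap.smulRight_apply, coe_innerSL_apply, smul_eq_mul, add_right_inj]
    congr 1
    ring

theorem norm_fderiv_Fpow_apply_sq (hd : 0 < δ + ‖a‖) (b : E) :
    ‖fderiv ℝ (Fpow p δ) a b‖ ^ 2 = (δ + ‖a‖) ^ (p - 4) * ((δ + ‖a‖) ^ 2 * ‖b‖ ^ 2 +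
      ((p - 2) * (δ + ‖a‖) * ‖a‖ + (p - 2) ^ 2 / 4 * ‖a‖ ^ 2) * (⟪a, b⟫ / ‖a‖) ^ 2) := by
  rw [fderiv_Fpow_apply hd]
  set d := δ + ‖a‖
  set s := ⟪a, b⟫ / ‖a‖
  set X := d ^ ((p - 2) / 2 - 1) with hX
  have hXd : d ^ ((p - 2) / 2) = X * d := by
    rw [hX, Real.rpow_sub_one hd.ne', div_mul_cancel₀ _ hd.ne']
  have hX2 : X ^ 2 = d ^ (p - 4) := by
    rw [← Real.rpow_natCast, ← Real.rpow_mul hd.le]; ring_nf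
  rw [hXd, norm_add_sq_real, norm_smul, norm_smul, real_inner_smul_left, real_inner_smul_right,
    real_inner_comm a b, ← inner_div_norm_mul_norm a b, ← hX2]
  simp only [Real.norm_eq_abs, mul_pow, sq_abs]
  ring

theorem fderiv_Fpow_sq_bounds (hp : 1 < p) (hδ : 0 ≤ δ) (hd : 0 < δ + ‖a‖) (b : E) :
    min 1 (p ^ 2 / 4) / max 1 (p - 1) * (phi'' p δ ‖a‖ * ‖b‖ ^ 2) ≤
        ‖fderiv ℝ (Fpow p δ) a b‖ ^ 2 ∧
      ‖fderiv ℝ (Fpow p δ) a b‖ ^ 2 ≤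
        max 1 (p ^ 2 / 4) / min 1 (p - 1) * (phi'' p δ ‖a‖ * ‖b‖ ^ 2) := by
  obtain ⟨h₀, h₁⟩ := quadratic_bounds hp hd (norm_nonneg a) (by linarith) (sq_nonneg _)
    (sq_inner_div_norm_le a b)
  have hX : 0 ≤ (δ + ‖a‖) ^ (p - 4) := Real.rpow_nonneg hd.le _
  rw [norm_fderiv_Fpow_apply_sq hd, phi''_eq_rpow_mul hd]
  constructor
  · linarith [mul_le_mul_of_nonneg_left h₀ hX]
  · linarith [mul_le_mul_of_nonneg_left h₁ hX]

end InnerProductSpace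

def matToEuclidean : Mat3 ≃L[ℝ] EuclideanSpace ℝ (Fin 3 × Fin 3) :=
  LinearEquiv.toContinuousLinearEquiv
    ((Matrix.ofLinearEquiv ℝ).symm ≪≫ₗ (LinearEquiv.curry ℝ ℝ (Fin 3) (Fin 3)).symm ≪≫ₗ
      (WithLp.linearEquiv 2 ℝ (Fin 3 × Fin 3 → ℝ)).symm)

theorem matToEuclidean_apply (M : Mat3) (x : Fin 3 × Fin 3) :
    matToEuclidean M x = M x.1 x.2 :=
  rfl

theorem norm_matToEuclidean (M : Mat3) : ‖matToEuclidean M‖ = mnorm M := by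
  rw [EuclideanSpace.norm_eq, mnorm, mdot, ← Fintype.sum_prod_type']
  simp [matToEuclidean_apply, sq]

theorem mnorm_matToEuclidean_symm (y : EuclideanSpace ℝ (Fin 3 × Fin 3)) :
    mnorm (matToEuclidean.symm y) = ‖y‖ := by
  rw [← norm_matToEuclidean, ContinuousLinearEquiv.apply_symm_apply]

def msymCLM : Mat3 →L[ℝ] Mat3 :=
  LinearMap.toContinuousLinearMap
    ((1 / 2 : ℝ) • (LinearMap.id + (transposeLinearEquiv (Fin 3) (Fin 3) ℝ ℝ).toLinearMap))

theorem msymCLM_apply (P : Mat3) : msymCLM P = msym P := rfl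

theorem msym_eq_self {B : Mat3} (hB : Bᵀ = B) : msym B = B := by
  rw [msym, hB, ← two_smul ℝ B, smul_smul]
  norm_num

theorem Fassoc_eq (p δ : ℝ) (P : Mat3) :
    Fassoc p δ P = matToEuclidean.symm (Fpow p δ (matToEuclidean (msym P))) := by
  apply matToEuclidean.injective
  simp [Fassoc, Fpow, norm_matToEuclidean]

theorem fderiv_Fassoc_apply {p δ : ℝ} {A B : Mat3} (hA : Aᵀ = A) (hB : Bᵀ = B)
    (hd : 0 < δ + mnorm A) :
    fderiv ℝ (Fassoc p δ) A B =
      matToEuclidean.symm (fderiv ℝ (Fpow p δ) (matToEuclidean A) (matToEuclidean B)) := by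
  have hF : DifferentiableAt ℝ (Fpow p δ) (matToEuclidean (msym A)) := by
    rw [msym_eq_self hA]
    exact differentiableAt_Fpow (by rwa [norm_matToEuclidean])
  have hmsym : HasFDerivAt msym msymCLM A := msymCLM.hasFDerivAt
  have h := matToEuclidean.symm.hasFDerivAt.comp A
    (hF.hasFDerivAt.comp A (matToEuclidean.hasFDerivAt.comp A hmsym))
  refine (congrArg (· B) (h.congr_of_eventuallyEq (.of_forall (Fassoc_eq p δ))).fderiv).trans ?_
  rw [msym_eq_self hA]
  show matToEuclidean.symm (fderiv ℝ (Fpow p δ) (matToEuclidean A) (matToEuclidean (msymCLM B))) = _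
  rw [msymCLM_apply, msym_eq_self hB]

/-- Equivalence `|DF(A)[B]|² ∼ φ''(|A|)·|B|²` for symmetric `A, B`, with constants
depending only on `p` (uniformly in `δ ≥ 0`, provided `(δ, |A|) ≠ (0,0)`). Here
`DF(A)[B] = (fderiv ℝ F A) B` is the directional derivative of `F` at `A` in
direction `B`. -/
theorem gradient_F_equivalence (p : ℝ) (hp : 1 < p) :
    ∃ c C : ℝ, 0 < c ∧ 0 < C ∧ ∀ δ : ℝ, 0 ≤ δ →
      ∀ A : Mat3, Aᵀ = A → ¬(δ = 0 ∧ A = 0) →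
        ∀ B : Mat3, Bᵀ = B →
          c * (phi'' p δ (mnorm A) * (mnorm B) ^ 2) ≤
              (mnorm (fderiv ℝ (Fassoc p δ) A B)) ^ 2 ∧
          (mnorm (fderiv ℝ (Fassoc p δ) A B)) ^ 2 ≤
              C * (phi'' p δ (mnorm A) * (mnorm B) ^ 2) := by
  have hlo : 0 < min 1 (p - 1) := lt_min one_pos (by linarith)
  have hhi : 0 < max 1 (p - 1) := one_pos.trans_le (le_max_left _ _)
  refine ⟨min 1 (p ^ 2 / 4) / max 1 (p - 1), max 1 (p ^ 2 / 4) / min 1 (p - 1),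
    div_pos (lt_min one_pos (by positivity)) hhi,
    div_pos (one_pos.trans_le (le_max_left _ _)) hlo, ?_⟩
  intro δ hδ A hA hδA B hB
  have hd : 0 < δ + mnorm A := by
    rcases hδ.lt_or_eq with hδ | rfl
    · exact add_pos_of_pos_of_nonneg hδ (Real.sqrt_nonneg _)
    · rw [zero_add, ← norm_matToEuclidean, norm_pos_iff]
      exact fun h => hδA ⟨rfl, matToEuclidean.map_eq_zero_iff.1 h⟩
  rw [fderiv_Fassoc_apply hA hB hd, mnorm_matToEuclidean_symm, ← norm_matToEuclidean A,
    ← norm_matToEuclidean B]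
  exact fderiv_Fpow_sq_bounds hp hδ (by rwa [norm_matToEuclidean]) _
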